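/- With αₙ₋₁ the last simple root of A_{n−1}, Λ_{n−2} the analogous weight for A_{n−2} ⊂ A_{n−1}, γ = 2nΛ_{n−1}, and γ* = γ/(2n(n−1)), one has the coset decomposition √2A_{n−1} = ⨆_{0≤i<n−1} ((√2A_{n−2} + 2iΛ_{n−2}) ⊕ (ℤγ − 2ni γ*)), arising from the identity αₙ₋₁ = 2nγ* − 2Λ_{n−2}. -/

import Mathlib

open scoped RealInnerProductSpace

/-- The `i`-th simple root `αᵢ = εᵢ - ε_{i+1}` of the root lattice `A_{n-1}`,
realized in `ℝⁿ`. -/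
noncomputable def rootA (n : ℕ) (i : Fin (n - 1)) : EuclideanSpace ℝ (Fin n) :=
  EuclideanSpace.single ⟨i.1, by have := i.2; omega⟩ 1 -
    EuclideanSpace.single ⟨i.1 + 1, by have := i.2; omega⟩ 1

/-- The weight `Λ_{n-1} = (√2/(2n))(α₁ + 2α₂ + ⋯ + (n-1)α_{n-1})`. -/
noncomputable def weightA (n : ℕ) : EuclideanSpace ℝ (Fin n) :=
  (Real.sqrt 2 / (2 * n)) • ∑ i : Fin (n - 1), ((i : ℝ) + 1) • rootA n i

/-- The analogous weight `Λ_{n-2}` for the sublattice `A_{n-2} ⊂ A_{n-1}`,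
realized in `ℝⁿ`. -/
noncomputable def weightA' (n : ℕ) : EuclideanSpace ℝ (Fin n) :=
  (Real.sqrt 2 / (2 * ((n : ℝ) - 1))) •
    ∑ i : Fin (n - 2), ((i : ℝ) + 1) • rootA n ⟨i.1, by have := i.2; omega⟩

/-!
Write `n = m + 2` and let `b = √2 α_{m+1}` be the last generator of `√2A_{n-1}`. Summing the
roots with their weights gives `2nΛ_{n-1} = (m + 1)(2Λ_{n-2} + b)`, so `2n γ* = 2Λ_{n-2} + b`,
and `2(m + 1)Λ_{n-2}` lies in `√2A_{n-2}`. Absorbing that vector into `√2A_{n-2}`, the `i`-th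
piece becomes `√2A_{n-2} + {k b : k ≡ -i mod (m + 1)}`. As `√2A_{n-1} = √2A_{n-2} ⊕ ℤb`, with the
sum direct because only `b` has a nonzero last coordinate, these pieces are exactly the cosets
of `√2A_{n-2} ⊕ (m + 1)ℤb`, indexed by the residues mod `m + 1`.
-/

theorem Submodule.span_range_fin_succ_eq_sup {R M : Type*} [Semiring R] [AddCommMonoid M]
    [Module R M] {n : ℕ} (f : Fin (n + 1) → M) :
    span R (Set.range f) = span R (Set.range (Fin.init f)) ⊔ R ∙ f (Fin.last n) := by
  conv_lhs => rw [← Fin.snoc_init_self f, Fin.range_snoc]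
  rw [span_insert, sup_comm]

section ResidueCoset

variable {M : Type*} [AddCommGroup M] (N : Submodule ℤ M) (b : M) (d : ℕ)

def residueCoset (i : ℕ) : Set M :=
  {x | ∃ a ∈ N, ∃ q : ℤ, x = a + (q * d - i) • b}

theorem iUnion_residueCoset (hd : 0 < d) :
    ⋃ i : Fin d, residueCoset N b d i = ((N ⊔ ℤ ∙ b : Submodule ℤ M) : Set M) := by
  ext x
  simp only [Set.mem_iUnion, SetLike.mem_coe, Submodule.mem_sup, Submodule.mem_span_singleton]
  constructor
  · rintro ⟨i, a, ha, q, rfl⟩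
    exact ⟨a, ha, _, ⟨_, rfl⟩, rfl⟩
  · rintro ⟨a, ha, _, ⟨k, rfl⟩, rfl⟩
    have hd' : (0 : ℤ) < d := by exact_mod_cast hd
    have hr₀ := Int.emod_nonneg (-k) hd'.ne'
    have hr₁ := Int.emod_lt_of_pos (-k) hd'
    refine ⟨⟨((-k) % d).toNat, by omega⟩, a, ha, -((-k) / d), ?_⟩
    have := Int.mul_ediv_add_emod (-k) d
    simp only [Int.toNat_of_nonneg hr₀]
    congr 2
    linarith

variable {N b d}

theorem disjoint_residueCoset (hb : ∀ k : ℤ, k • b ∈ N → k = 0) {i j : ℕ} (hi : i < d)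
    (hj : j < d) (hij : i ≠ j) : Disjoint (residueCoset N b d i) (residueCoset N b d j) := by
  rw [Set.disjoint_left]
  rintro _ ⟨a, ha, q, rfl⟩ ⟨a', ha', q', heq⟩
  have hk : (q * d - i - (q' * d - j)) • b = a' - a := by
    linear_combination (norm := module) heq
  have hdvd : (d : ℤ) ∣ (i : ℤ) - j := ⟨q - q', by linarith [hb _ (hk ▸ N.sub_mem ha' ha)]⟩
  have := Int.eq_zero_of_abs_lt_dvd hdvd (by rw [abs_lt]; omega)
  omega

theorem setOf_eq_residueCoset {E : Type*} [AddCommGroup E] [Module ℝ E] {N : Submodule ℤ E}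
    {lam b : E} {d : ℕ} (hlam : (d : ℝ) • lam ∈ N) (i : ℕ) :
    {x | ∃ a ∈ N, ∃ q : ℤ, x = a + (i : ℝ) • lam + q • ((d : ℝ) • (lam + b)) - (i : ℝ) • (lam + b)}
      = residueCoset N b d i := by
  have key : ∀ (a : E) (q : ℤ), a + (i : ℝ) • lam + q • ((d : ℝ) • (lam + b)) - (i : ℝ) • (lam + b)
      = (a + q • (d : ℝ) • lam) + (q * d - i) • b := fun a q => by module
  ext x
  simp only [Set.mem_ofPred_eq, key]
  constructor
  · rintro ⟨a, ha, q, rfl⟩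
    exact ⟨_, N.add_mem ha (N.smul_mem q hlam), q, rfl⟩
  · rintro ⟨a, ha, q, rfl⟩
    exact ⟨_, N.sub_mem ha (N.smul_mem q hlam), q, by rw [sub_add_cancel]⟩

end ResidueCoset

theorem rootA_castSucc_apply_last (m : ℕ) (i : Fin m) :
    rootA (m + 2) i.castSucc (Fin.last (m + 1)) = 0 := by
  have hi := i.isLt
  simp [rootA, Fin.ext_iff, show m + 1 ≠ i by omega, show m ≠ i by omega]

theorem rootA_last_apply_last (m : ℕ) : rootA (m + 2) (Fin.last m) (Fin.last (m + 1)) = -1 := by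
  simp [rootA, Fin.ext_iff]

theorem two_mul_smul_weightA' (m : ℕ) :
    (2 * ((m : ℝ) + 1)) • weightA' (m + 2) =
      ∑ i : Fin m, ((i : ℤ) + 1) • (Real.sqrt 2 • rootA (m + 2) i.castSucc) := by
  have h : (2 * ((m : ℝ) + 1)) * (Real.sqrt 2 / (2 * (((m + 2 : ℕ) : ℝ) - 1))) = Real.sqrt 2 := by
    rw [show ((m + 2 : ℕ) : ℝ) - 1 = m + 1 by push_cast; ring]
    field_simp
  rw [weightA', smul_smul, h, Finset.smul_sum]
  refine Finset.sum_congr rfl fun i _ => ?_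
  rw [smul_comm, ← Int.cast_smul_eq_zsmul ℝ]
  push_cast
  rfl

theorem two_mul_smul_weightA'_mem_span (m : ℕ) :
    (2 * ((m : ℝ) + 1)) • weightA' (m + 2) ∈
      Submodule.span ℤ (Set.range fun i : Fin m => Real.sqrt 2 • rootA (m + 2) i.castSucc) := by
  rw [two_mul_smul_weightA']
  exact Submodule.sum_mem _ fun i _ => Submodule.smul_mem _ _ (Submodule.subset_span ⟨i, rfl⟩)

theorem two_mul_smul_weightA (m : ℕ) :
    (2 * ((m : ℝ) + 2)) • weightA (m + 2) =
      ((m : ℝ) + 1) • ((2 : ℝ) • weightA' (m + 2) + Real.sqrt 2 • rootA (m + 2) (Fin.last m)) := by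
  have h : (2 * ((m : ℝ) + 2)) * (Real.sqrt 2 / (2 * ((m + 2 : ℕ) : ℝ))) = Real.sqrt 2 := by
    push_cast
    field_simp
  rw [weightA, smul_smul, h, smul_add, smul_smul, mul_comm, two_mul_smul_weightA']
  change Real.sqrt 2 • ∑ i : Fin (m + 1), _ = _
  rw [Fin.sum_univ_castSucc, smul_add, Finset.smul_sum]
  congr 1
  · refine Finset.sum_congr rfl fun i _ => ?_
    rw [smul_comm, ← Int.cast_smul_eq_zsmul ℝ]
    push_cast
    rfl
  · rw [smul_comm]
    simp

theorem eq_zero_of_zsmul_rootA_last_mem_span (m : ℕ) {k : ℤ}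
    (hk : k • (Real.sqrt 2 • rootA (m + 2) (Fin.last m)) ∈
      Submodule.span ℤ (Set.range fun i : Fin m => Real.sqrt 2 • rootA (m + 2) i.castSucc)) :
    k = 0 := by
  let coord : EuclideanSpace ℝ (Fin (m + 2)) →ₗ[ℤ] ℝ :=
    (EuclideanSpace.proj (Fin.last (m + 1)) : EuclideanSpace ℝ (Fin (m + 2)) →L[ℝ] ℝ)
      |>.toLinearMap.restrictScalars ℤ
  have hle : Submodule.span ℤ (Set.range fun i : Fin m => Real.sqrt 2 • rootA (m + 2) i.castSucc)
      ≤ LinearMap.ker coord := by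
    rw [Submodule.span_le]
    rintro _ ⟨i, rfl⟩
    simp [coord, rootA_castSucc_apply_last]
  simpa [coord, rootA_last_apply_last] using hle hk

/-- With `α_{n-1}` the last simple root of `A_{n-1}`, `Λ_{n-2}` the analogous weight for
`A_{n-2} ⊂ A_{n-1}`, `γ = 2nΛ_{n-1}` and `γ* = γ/(2n(n-1))`, one has the identity
`√2 α_{n-1} = 2nγ* - 2Λ_{n-2}` and the coset decomposition
`√2A_{n-1} = ⨆_{0 ≤ i < n-1} ((√2A_{n-2} + 2iΛ_{n-2}) ⊕ (ℤγ - 2ni γ*))`. -/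
theorem stmt_16 (n : ℕ) (hn : 2 ≤ n)
    (γ γs : EuclideanSpace ℝ (Fin n))
    (hγ : γ = (2 * (n : ℝ)) • weightA n)
    (hγs : γs = (2 * (n : ℝ) * ((n : ℝ) - 1))⁻¹ • γ)
    (L L₂ : Submodule ℤ (EuclideanSpace ℝ (Fin n)))
    (hL : L = Submodule.span ℤ (Set.range fun i : Fin (n - 1) => Real.sqrt 2 • rootA n i))
    (hL₂ : L₂ = Submodule.span ℤ
      (Set.range fun i : Fin (n - 2) =>
        Real.sqrt 2 • rootA n ⟨i.1, by have := i.2; omega⟩))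
    (S : Fin (n - 1) → Set (EuclideanSpace ℝ (Fin n)))
    (hS : ∀ i : Fin (n - 1), S i = {x | ∃ a ∈ L₂, ∃ m : ℤ,
      x = a + (2 * (i : ℝ)) • weightA' n + m • γ - (2 * (n : ℝ) * (i : ℝ)) • γs}) :
    Real.sqrt 2 • rootA n ⟨n - 2, by omega⟩ =
        (2 * (n : ℝ)) • γs - (2 : ℝ) • weightA' n ∧
    (L : Set (EuclideanSpace ℝ (Fin n))) = ⋃ i : Fin (n - 1), S i ∧
    (∀ i j : Fin (n - 1), i ≠ j → Disjoint (S i) (S j)) := by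
  obtain ⟨m, rfl⟩ : ∃ m, n = m + 2 := ⟨n - 2, by omega⟩
  set B := Real.sqrt 2 • rootA (m + 2) (Fin.last m)
  set lam := (2 : ℝ) • weightA' (m + 2)
  have hL₂' : L₂ = Submodule.span ℤ
      (Set.range fun i : Fin m => Real.sqrt 2 • rootA (m + 2) i.castSucc) := hL₂
  have hL' : L = L₂ ⊔ ℤ ∙ B := by
    rw [hL, hL₂']
    exact Submodule.span_range_fin_succ_eq_sup (n := m) fun i => Real.sqrt 2 • rootA (m + 2) i
  have hlam : ((m + 1 : ℕ) : ℝ) • lam ∈ L₂ := by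
    rw [hL₂', smul_smul, show ((m + 1 : ℕ) : ℝ) * 2 = 2 * ((m : ℝ) + 1) by push_cast; ring]
    exact two_mul_smul_weightA'_mem_span m
  have hγ' : γ = ((m + 1 : ℕ) : ℝ) • (lam + B) := by
    rw [hγ]
    push_cast
    exact two_mul_smul_weightA m
  have hγs' : ∀ t : ℝ, (2 * ((m + 2 : ℕ) : ℝ) * t) • γs = t • (lam + B) := by
    intro t
    rw [hγs, hγ', smul_smul, smul_smul, show ((m + 2 : ℕ) : ℝ) - 1 = ((m + 1 : ℕ) : ℝ) by push_cast; ring]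
    field_simp
  have hS' : ∀ i : Fin (m + 1), S i = residueCoset L₂ B (m + 1) i := by
    intro i
    rw [hS i, ← setOf_eq_residueCoset hlam, ← hγ']
    simp only [hγs']
    simp only [lam, smul_smul, mul_comm (2 : ℝ)]
  refine ⟨?_, ?_, fun i j hij => ?_⟩
  · rw [← mul_one (2 * ((m + 2 : ℕ) : ℝ)), hγs', one_smul]
    exact (add_sub_cancel_left lam B).symm
  · rw [hL', ← iUnion_residueCoset L₂ B (m + 1) m.succ_pos]
    exact Set.iUnion_congr fun i => (hS' i).symm
  · rw [hS', hS']
    refine disjoint_residueCoset (fun k hk => ?_) i.isLt j.isLt (Fin.val_ne_of_ne hij)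
    exact eq_zero_of_zsmul_rootA_last_mem_span m (hL₂' ▸ hk)
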